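/- arXiv:2304.00096 — 4 statements merged into one kernel-verified Lean document; each statement's English description precedes it below -/
import Mathlib

section
/- Let M, K be positive integers, N ≥ 2, let p ∈ Δ^M have all entries strictly positive, and let U, V ∈ ℝ^{K×M}. Suppose Z ∈ 𝒵 and a row-stochastic A ∈ ℝ^{N×K} satisfy: (i) Tr(AUZ) ≥ Tr(AUZ') for every Z' ∈ 𝒵, and (ii) diag(AVZ) ⪰ diag(A'VZ) for every row-stochastic A' ∈ ℝ^{N×K}. Define γ = Zᵀ𝟙, Λ_{mn} = Z_{mn}/γ_n, and Π_{mn} = Z_{mn}/p_m. Then (Π, A, Λ) is a non-degenerate perfect Bayesian equilibrium in matrix form: Π is row-stochastic; γ_n > 0 for every n; Λ_{mn} = p_m Π_{mn}/(Πᵀp)_n for all m, n; Tr(PΠAU) ≥ Tr(PΠ'AU) for every row-stochastic Π' ∈ ℝ^{M×N}; and diag(AVΛ) ⪰ diag(A'VΛ) for every row-stochastic A' ∈ ℝ^{N×K}, where P = diag(p). -/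
open Matrix BigOperators

/-- A matrix is row-stochastic if it has nonnegative entries and each row sums to 1. -/
def RowStochastic {m n : ℕ} (A : Matrix (Fin m) (Fin n) ℝ) : Prop :=
  (∀ i j, 0 ≤ A i j) ∧ ∀ i, ∑ j, A i j = 1

/-- The set 𝒵 of Bayesian-plausible matrices for a prior `p`:
nonnegative entries, row sums equal to `p`, and column sums strictly between 0 and 1. -/
def ZSet {M N : ℕ} (p : Fin M → ℝ) : Set (Matrix (Fin M) (Fin N) ℝ) :=
  {Z | (∀ m n, 0 ≤ Z m n) ∧ (∀ m, ∑ n, Z m n = p m) ∧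
    ∀ n, 0 < ∑ m, Z m n ∧ ∑ m, Z m n < 1}

theorem stmt_3 (M N K : ℕ) (hM : 0 < M) (hK : 0 < K) (hN : 2 ≤ N)
    (p : Fin M → ℝ) (hp : p ∈ stdSimplex ℝ (Fin M)) (hppos : ∀ m, 0 < p m)
    (U V : Matrix (Fin K) (Fin M) ℝ)
    (Z : Matrix (Fin M) (Fin N) ℝ) (hZ : Z ∈ ZSet p)
    (A : Matrix (Fin N) (Fin K) ℝ) (hA : RowStochastic A)
    (hsender : ∀ Z' ∈ ZSet (N := N) p,
      Matrix.trace (A * U * Z') ≤ Matrix.trace (A * U * Z))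
    (hreceiver : ∀ A' : Matrix (Fin N) (Fin K) ℝ, RowStochastic A' →
      ∀ n, (A' * V * Z).diag n ≤ (A * V * Z).diag n)
    (γ : Fin N → ℝ) (hγ : ∀ n, γ n = ∑ m, Z m n)
    (Λ : Matrix (Fin M) (Fin N) ℝ) (hΛ : ∀ m n, Λ m n = Z m n / γ n)
    (Pmat : Matrix (Fin M) (Fin N) ℝ) (hPmat : ∀ m n, Pmat m n = Z m n / p m) :
    RowStochastic Pmat ∧
    (∀ n, 0 < γ n) ∧
    (∀ m n, Λ m n = p m * Pmat m n / (Pmat.transpose.mulVec p) n) ∧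
    (∀ Pmat' : Matrix (Fin M) (Fin N) ℝ, RowStochastic Pmat' →
      Matrix.trace (Matrix.diagonal p * Pmat' * A * U) ≤
        Matrix.trace (Matrix.diagonal p * Pmat * A * U)) ∧
    (∀ A' : Matrix (Fin N) (Fin K) ℝ, RowStochastic A' →
      ∀ n, (A' * V * Λ).diag n ≤ (A * V * Λ).diag n) := by
  obtain ⟨hZnn, hZrow, hZcol⟩ := hZ
  have hγpos : ∀ n, 0 < γ n := fun n => (hγ n) ▸ (hZcol n).1
  have hPrs : RowStochastic Pmat := by
    constructor
    · intro m n; rw [hPmat]; exact div_nonneg (hZnn m n) (hppos m).le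
    · intro m
      simp only [hPmat]
      rw [← Finset.sum_div, hZrow, div_self (hppos m).ne']
  have hDP : Matrix.diagonal p * Pmat = Z := by
    ext m n
    rw [Matrix.diagonal_mul, hPmat, mul_comm, div_mul_cancel₀ _ (hppos m).ne']
  refine ⟨hPrs, hγpos, ?_, ?_, ?_⟩
  · intro m n
    have hcol : (Pmat.transpose.mulVec p) n = γ n := by
      simp only [Matrix.mulVec, dotProduct, Matrix.transpose_apply, hPmat, hγ]
      refine Finset.sum_congr rfl fun m _ => ?_
      rw [div_mul_cancel₀ _ (hppos m).ne']
    rw [hcol, hΛ, hPmat]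
    rw [mul_div_assoc', mul_comm, mul_div_assoc, div_self (hppos m).ne', mul_one]
  · intro P' hP'
    set Z' : Matrix (Fin M) (Fin N) ℝ := Matrix.diagonal p * P' with hZ'
    have hZ'e : ∀ m n, Z' m n = p m * P' m n := fun m n => Matrix.diagonal_mul _ _ _ _
    have hZhalf : (2:ℝ)⁻¹ • (Z + Z') ∈ ZSet p := by
      refine ⟨?_, ?_, ?_⟩
      · intro m n
        simp only [Matrix.smul_apply, Matrix.add_apply, smul_eq_mul, hZ'e]
        have h1 := hZnn m n; have h2 := hppos m; have h3 := hP'.1 m n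
        positivity
      · intro m
        simp only [Matrix.smul_apply, Matrix.add_apply, smul_eq_mul]
        rw [← Finset.mul_sum, Finset.sum_add_distrib, hZrow]
        have : ∑ n, Z' m n = p m := by
          simp only [hZ'e, ← Finset.mul_sum, hP'.2 m, mul_one]
        rw [this]; ring
      · intro n
        have hc1 : (0:ℝ) ≤ ∑ m, Z' m n := Finset.sum_nonneg fun m _ =>
          (hZ'e m n) ▸ mul_nonneg (hppos m).le (hP'.1 m n)
        have hc2 : ∑ m, Z' m n ≤ 1 := by
          have : ∀ m, Z' m n ≤ p m := fun m => by
            rw [hZ'e]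
            have hle1 : P' m n ≤ 1 := by
              have := hP'.2 m
              calc P' m n ≤ ∑ j, P' m j :=
                Finset.single_le_sum (fun j _ => hP'.1 m j) (Finset.mem_univ n)
              _ = 1 := hP'.2 m
            nlinarith [hppos m]
          calc ∑ m, Z' m n ≤ ∑ m, p m := Finset.sum_le_sum fun m _ => this m
          _ = 1 := hp.2
        constructor
        · simp only [Matrix.smul_apply, Matrix.add_apply, smul_eq_mul]
          rw [← Finset.mul_sum, Finset.sum_add_distrib]
          have := (hZcol n).1
          positivity
        · simp only [Matrix.smul_apply, Matrix.add_apply, smul_eq_mul]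
          rw [← Finset.mul_sum, Finset.sum_add_distrib]
          have := (hZcol n).2
          linarith
    have hkey := hsender _ hZhalf
    have hexpand : Matrix.trace (A * U * ((2:ℝ)⁻¹ • (Z + Z'))) =
        (2:ℝ)⁻¹ * (Matrix.trace (A * U * Z) + Matrix.trace (A * U * Z')) := by
      rw [Matrix.mul_smul, Matrix.trace_smul, Matrix.mul_add, Matrix.trace_add]
      simp [smul_eq_mul]
    have htr' : Matrix.trace (A * U * Z') ≤ Matrix.trace (A * U * Z) := by
      rw [hexpand] at hkey; linarith
    have e1 : Matrix.trace (Matrix.diagonal p * P' * A * U) =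
        Matrix.trace (A * U * Z') := by
      rw [← hZ', Matrix.mul_assoc, Matrix.trace_mul_comm, ← Matrix.mul_assoc]
    have e2 : Matrix.trace (Matrix.diagonal p * Pmat * A * U) =
        Matrix.trace (A * U * Z) := by
      rw [hDP, Matrix.mul_assoc, Matrix.trace_mul_comm]
    rw [e1, e2]; exact htr'
  · intro A' hA' n
    have hΛd : Λ = Z * Matrix.diagonal (fun n => (γ n)⁻¹) := by
      ext m n
      rw [Matrix.mul_diagonal, hΛ, div_eq_mul_inv]
    have hdiag : ∀ (B : Matrix (Fin N) (Fin K) ℝ),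
        (B * V * Λ).diag n = (B * V * Z).diag n * (γ n)⁻¹ := by
      intro B
      rw [hΛd, ← Matrix.mul_assoc]
      simp [Matrix.diag, Matrix.mul_diagonal]
    rw [hdiag, hdiag]
    exact mul_le_mul_of_nonneg_right (hreceiver A' hA' n) (inv_nonneg.2 (hγpos n).le)
end

section
/- Let p ∈ Δ^M, U ∈ ℝ^{K×M} and V = −U (a zero-sum communication game), and let N be a positive integer. Suppose γ ∈ Δ^N with γ_i > 0 for all i, a_i ∈ Δ^K and λ_i ∈ Δ^M satisfy ∑_{i=1}^N γ_i λ_i = p and, for every i, the saddle-point conditions a_iᵀUλ' ≤ a_iᵀUλ_i ≤ a'ᵀUλ_i for all λ' ∈ Δ^M and a' ∈ Δ^K (a belief-dominant non-degenerate PBE). Then for every γ' ∈ Δ^N, a_i' ∈ Δ^K and λ_i' ∈ Δ^M with ∑_{i=1}^N γ_i' λ_i' = p and a_i'ᵀVλ_i' ≥ a'ᵀVλ_i' for all a' ∈ Δ^K for every i, one has ∑_{i=1}^N γ_i' a_i'ᵀUλ_i' ≤ ∑_{i=1}^N γ_i a_iᵀUλ_i. Consequently the sender's belief-dominant PBE payoff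 equals the optimal overt-persuasion payoff, i.e. the price of transparency equals 1. -/
open Matrix BigOperators

theorem stmt_9 (M N K : ℕ) (hN : 0 < N)
    (p : Fin M → ℝ) (hp : p ∈ stdSimplex ℝ (Fin M))
    (U V : Matrix (Fin K) (Fin M) ℝ) (hzero : V = -U)
    (γ : Fin N → ℝ) (hγ : γ ∈ stdSimplex ℝ (Fin N)) (hγpos : ∀ i, 0 < γ i)
    (a : Fin N → Fin K → ℝ) (lam : Fin N → Fin M → ℝ)
    (ha : ∀ i, a i ∈ stdSimplex ℝ (Fin K))
    (hlam : ∀ i, lam i ∈ stdSimplex ℝ (Fin M))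
    (hbary : ∀ m, ∑ i, γ i * lam i m = p m)
    (hsaddle : ∀ i,
      (∀ lam' ∈ stdSimplex ℝ (Fin M),
        a i ⬝ᵥ U.mulVec lam' ≤ a i ⬝ᵥ U.mulVec (lam i)) ∧
      (∀ a' ∈ stdSimplex ℝ (Fin K),
        a i ⬝ᵥ U.mulVec (lam i) ≤ a' ⬝ᵥ U.mulVec (lam i))) :
    (∀ (γ' : Fin N → ℝ) (a' : Fin N → Fin K → ℝ) (lam' : Fin N → Fin M → ℝ),
      γ' ∈ stdSimplex ℝ (Fin N) →
      (∀ i, a' i ∈ stdSimplex ℝ (Fin K)) →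
      (∀ i, lam' i ∈ stdSimplex ℝ (Fin M)) →
      (∀ m, ∑ i, γ' i * lam' i m = p m) →
      (∀ i, ∀ a'' ∈ stdSimplex ℝ (Fin K),
        a'' ⬝ᵥ V.mulVec (lam' i) ≤ a' i ⬝ᵥ V.mulVec (lam' i)) →
      ∑ i, γ' i * (a' i ⬝ᵥ U.mulVec (lam' i)) ≤
        ∑ i, γ i * (a i ⬝ᵥ U.mulVec (lam i))) ∧
    sSup {r : ℝ | ∃ (γ' : Fin N → ℝ) (a' : Fin N → Fin K → ℝ)
        (lam' : Fin N → Fin M → ℝ),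
      γ' ∈ stdSimplex ℝ (Fin N) ∧
      (∀ i, a' i ∈ stdSimplex ℝ (Fin K)) ∧
      (∀ i, lam' i ∈ stdSimplex ℝ (Fin M)) ∧
      (∀ m, ∑ i, γ' i * lam' i m = p m) ∧
      (∀ i, ∀ a'' ∈ stdSimplex ℝ (Fin K),
        a'' ⬝ᵥ V.mulVec (lam' i) ≤ a' i ⬝ᵥ V.mulVec (lam' i)) ∧
      r = ∑ i, γ' i * (a' i ⬝ᵥ U.mulVec (lam' i))} =
      ∑ i, γ i * (a i ⬝ᵥ U.mulVec (lam i)) := by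
  subst hzero
  set i0 : Fin N := ⟨0, hN⟩
  set v : ℝ := a i0 ⬝ᵥ U.mulVec (lam i0) with hv
  have hval : ∀ i, a i ⬝ᵥ U.mulVec (lam i) = v := by
    intro i
    apply le_antisymm
    · exact le_trans ((hsaddle i).2 (a i0) (ha i0)) ((hsaddle i0).1 (lam i) (hlam i))
    · exact le_trans ((hsaddle i0).2 (a i) (ha i)) ((hsaddle i).1 (lam i0) (hlam i0))
  have hsum : ∑ i, γ i * (a i ⬝ᵥ U.mulVec (lam i)) = v := by
    simp only [hval, ← Finset.sum_mul, hγ.2, one_mul]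
  have key : ∀ (γ' : Fin N → ℝ) (a' : Fin N → Fin K → ℝ) (lam' : Fin N → Fin M → ℝ),
      γ' ∈ stdSimplex ℝ (Fin N) →
      (∀ i, a' i ∈ stdSimplex ℝ (Fin K)) →
      (∀ i, lam' i ∈ stdSimplex ℝ (Fin M)) →
      (∀ m, ∑ i, γ' i * lam' i m = p m) →
      (∀ i, ∀ a'' ∈ stdSimplex ℝ (Fin K),
        a'' ⬝ᵥ (-U).mulVec (lam' i) ≤ a' i ⬝ᵥ (-U).mulVec (lam' i)) →
      ∑ i, γ' i * (a' i ⬝ᵥ U.mulVec (lam' i)) ≤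
        ∑ i, γ i * (a i ⬝ᵥ U.mulVec (lam i)) := by
    intro γ' a' lam' hγ' ha' hlam' _ hbr
    rw [hsum]
    calc ∑ i, γ' i * (a' i ⬝ᵥ U.mulVec (lam' i))
        ≤ ∑ i, γ' i * v := by
          apply Finset.sum_le_sum
          intro i _
          apply mul_le_mul_of_nonneg_left _ (hγ'.1 i)
          have h1 : a' i ⬝ᵥ U.mulVec (lam' i) ≤ a i0 ⬝ᵥ U.mulVec (lam' i) := by
            have := hbr i (a i0) (ha i0)
            simpa [Matrix.neg_mulVec, dotProduct_neg] using this
          exact le_trans h1 ((hsaddle i0).1 (lam' i) (hlam' i))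
      _ = v := by rw [← Finset.sum_mul, hγ'.2, one_mul]
  refine ⟨key, ?_⟩
  rw [hsum]
  have hmem : v ∈ {r : ℝ | ∃ (γ' : Fin N → ℝ) (a' : Fin N → Fin K → ℝ)
        (lam' : Fin N → Fin M → ℝ),
      γ' ∈ stdSimplex ℝ (Fin N) ∧
      (∀ i, a' i ∈ stdSimplex ℝ (Fin K)) ∧
      (∀ i, lam' i ∈ stdSimplex ℝ (Fin M)) ∧
      (∀ m, ∑ i, γ' i * lam' i m = p m) ∧
      (∀ i, ∀ a'' ∈ stdSimplex ℝ (Fin K),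
        a'' ⬝ᵥ (-U).mulVec (lam' i) ≤ a' i ⬝ᵥ (-U).mulVec (lam' i)) ∧
      r = ∑ i, γ' i * (a' i ⬝ᵥ U.mulVec (lam' i))} := by
    refine ⟨γ, a, lam, hγ, ha, hlam, hbary, ?_, hsum.symm⟩
    intro i a'' ha''
    have := (hsaddle i).2 a'' ha''
    simpa [Matrix.neg_mulVec, dotProduct_neg] using this
  apply le_antisymm
  · apply csSup_le ⟨v, hmem⟩
    rintro r ⟨γ', a', lam', h1, h2, h3, h4, h5, rfl⟩
    rw [← hsum]
    exact key γ' a' lam' h1 h2 h3 h4 h5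
  · apply le_csSup ⟨v, ?_⟩ hmem
    rintro r ⟨γ', a', lam', h1, h2, h3, h4, h5, rfl⟩
    rw [← hsum]
    exact key γ' a' lam' h1 h2 h3 h4 h5
end

section
/- Let U ∈ ℝ^{K×M}, V = −U, N ≥ 2, and let (a, λ) ∈ Δ^K × Δ^M be a saddle point of U: aᵀUλ' ≤ aᵀUλ ≤ a'ᵀUλ for all λ' ∈ Δ^M and a' ∈ Δ^K. Take the prior p = λ, and define Z = (1/N)·λ𝟙ᵀ ∈ ℝ^{M×N} and A = 𝟙aᵀ ∈ ℝ^{N×K}. Then Z ∈ 𝒵, A is row-stochastic, Tr(AUZ) ≥ Tr(AUZ') for every Z' ∈ 𝒵, and diag(AVZ) ⪰ diag(A'VZ) for every row-stochastic A' ∈ ℝ^{N×K}; that is, the uninformative information structure together with the receiver ignoring every signal (posterior equal to the prior after each signal) is a belief-dominant non-degenerate perfect Bayesian equilibrium of this strictly competitive communication game. -/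
open Matrix BigOperators

theorem stmt_11 (M K N : ℕ) (hN : 2 ≤ N)
    (U V : Matrix (Fin K) (Fin M) ℝ) (hzero : V = -U)
    (a : Fin K → ℝ) (lam : Fin M → ℝ)
    (ha : a ∈ stdSimplex ℝ (Fin K)) (hlam : lam ∈ stdSimplex ℝ (Fin M))
    (hsaddle : (∀ lam' ∈ stdSimplex ℝ (Fin M),
        a ⬝ᵥ U.mulVec lam' ≤ a ⬝ᵥ U.mulVec lam) ∧
      (∀ a' ∈ stdSimplex ℝ (Fin K),
        a ⬝ᵥ U.mulVec lam ≤ a' ⬝ᵥ U.mulVec lam))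
    (p : Fin M → ℝ) (hp : p = lam)
    (Z : Matrix (Fin M) (Fin N) ℝ) (hZ : ∀ m n, Z m n = lam m / N)
    (A : Matrix (Fin N) (Fin K) ℝ) (hA : ∀ n k, A n k = a k) :
    Z ∈ ZSet p ∧ RowStochastic A ∧
    (∀ Z' ∈ ZSet (N := N) p,
      Matrix.trace (A * U * Z') ≤ Matrix.trace (A * U * Z)) ∧
    (∀ A' : Matrix (Fin N) (Fin K) ℝ, RowStochastic A' →
      ∀ n, (A' * V * Z).diag n ≤ (A * V * Z).diag n) := by
  obtain ⟨hsad1, hsad2⟩ := hsaddle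
  have hNpos : (0:ℝ) < (N:ℝ) := by
    have : (0:ℕ) < N := by omega
    exact_mod_cast this
  have hlamsum : ∑ m, lam m = 1 := hlam.2
  have hZmem : Z ∈ ZSet p := by
    refine ⟨?_, ?_, ?_⟩
    · intro m n
      rw [hZ]
      exact div_nonneg (hlam.1 m) hNpos.le
    · intro m
      rw [hp]
      simp only [hZ, Finset.sum_const, Finset.card_univ, Fintype.card_fin, nsmul_eq_mul]
      field_simp
    · intro n
      have hcol : ∑ m, Z m n = 1 / N := by
        simp only [hZ, ← Finset.sum_div, hlamsum]
      rw [hcol]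
      constructor
      · positivity
      · rw [div_lt_one hNpos]
        exact_mod_cast by omega
  have htr : ∀ Z' : Matrix (Fin M) (Fin N) ℝ, (∀ m, ∑ n, Z' m n = p m) →
      Matrix.trace (A * U * Z') = a ⬝ᵥ U.mulVec lam := by
    intro Z' hrow
    have : Matrix.trace (A * U * Z')
        = ∑ n, ∑ j, (∑ k, a k * U k j) * Z' j n := by
      simp [Matrix.trace, Matrix.diag, Matrix.mul_apply, hA]
    rw [this, Finset.sum_comm]
    have : ∀ j, ∑ n, (∑ k, a k * U k j) * Z' j n
        = (∑ k, a k * U k j) * lam j := by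
      intro j
      rw [← Finset.mul_sum, hrow j, hp]
    simp only [this]
    simp only [dotProduct, Matrix.mulVec, dotProduct, Finset.mul_sum]
    rw [Finset.sum_comm]
    congr 1; ext j
    rw [Finset.sum_mul]
    congr 1; ext k
    ring
  have hdiag : ∀ A' : Matrix (Fin N) (Fin K) ℝ, ∀ n,
      (A' * V * Z).diag n = (-(A' n ⬝ᵥ U.mulVec lam)) / N := by
    intro A' n
    have : (A' * V * Z).diag n = ∑ j, (∑ k, A' n k * V k j) * (lam j / N) := by
      simp [Matrix.diag, Matrix.mul_apply, hZ]
    rw [this]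
    subst hzero
    calc ∑ j, (∑ k, A' n k * (-U) k j) * (lam j / N)
        = ∑ j, ∑ k, -(A' n k * (U k j * lam j)) / N := by
          refine Finset.sum_congr rfl fun j _ => ?_
          rw [Finset.sum_mul]
          refine Finset.sum_congr rfl fun k _ => ?_
          simp only [Matrix.neg_apply]
          ring
      _ = ∑ k, ∑ j, -(A' n k * (U k j * lam j)) / N := Finset.sum_comm
      _ = (-(A' n ⬝ᵥ U.mulVec lam)) / N := by
          simp only [dotProduct, Matrix.mulVec, dotProduct, neg_div,
            Finset.sum_div, Finset.mul_sum, Finset.sum_neg_distrib]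
  refine ⟨hZmem, ⟨fun n k => by rw [hA]; exact ha.1 k,
      fun n => by simp [hA, ha.2]⟩, ?_, ?_⟩
  · intro Z' hZ'
    rw [htr Z' hZ'.2.1, htr Z hZmem.2.1]
  · intro A' hA' n
    rw [hdiag A' n, hdiag A n]
    have hmem : A' n ∈ stdSimplex ℝ (Fin K) := ⟨fun k => hA'.1 n k, hA'.2 n⟩
    have h1 := hsad2 (A' n) hmem
    have hAn : A n ⬝ᵥ U.mulVec lam = a ⬝ᵥ U.mulVec lam := by
      simp [dotProduct, hA]
    rw [hAn]
    gcongr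
end

section
/- Let b > 0 and let N ≥ 1 be an integer with 2bN(N−1) < 1, and define k_i = i/N + 2b·i·(i−N) for i = 0, 1, …, N. Then k_0 = 0, k_N = 1, and k_{i−1} < k_i for every i = 1, …, N, so 0 = k_0 < k_1 < ⋯ < k_N = 1 is a valid partition of [0,1]. Moreover, for every b ∈ (0, 1/4), the integer N(b) = ⌈−1/2 + (1/2)√(1 + 2/b)⌉ satisfies N(b) ≥ 2 and 2b·N(b)·(N(b)−1) < 1. -/
open Real

noncomputable def cutPoint (b : ℝ) (N i : ℕ) : ℝ :=
  (i : ℝ) / N + 2 * b * i * ((i : ℝ) - N)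

/-- The paper's `N(b)`. -/
noncomputable def maxPartitionSize (b : ℝ) : ℤ := ⌈(-1 / 2 : ℝ) + √(1 + 2 / b) / 2⌉

@[simp]
theorem cutPoint_zero (b : ℝ) (N : ℕ) : cutPoint b N 0 = 0 := by
  simp [cutPoint]

theorem cutPoint_self (b : ℝ) {N : ℕ} (hN : N ≠ 0) : cutPoint b N N = 1 := by
  simp [cutPoint, hN]

theorem cutPoint_succ_sub (b : ℝ) (N i : ℕ) :
    cutPoint b N (i + 1) - cutPoint b N i = 1 / N + 2 * b * (2 * i + 1 - N) := by
  simp only [cutPoint]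
  push_cast
  ring

/-- The increments `1/N + 2b(2i + 1 − N)` grow with `i`, and the first one is
`(1 − 2bN(N − 1))/N`. -/
theorem cutPoint_lt_succ {b : ℝ} {N : ℕ} (hb : 0 ≤ b) (hN : 0 < N)
    (hadm : 2 * b * N * (N - 1) < 1) (i : ℕ) : cutPoint b N i < cutPoint b N (i + 1) := by
  have hN' : (0 : ℝ) < N := by exact_mod_cast hN
  have hfirst : 0 < 1 / (N : ℝ) + 2 * b * (1 - N) := by
    rw [div_add' _ _ _ hN'.ne']
    exact div_pos (by linarith) hN'
  have hmono : 2 * b * (1 - N) ≤ 2 * b * (2 * i + 1 - N) := by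
    gcongr
    linarith [(Nat.cast_nonneg i : (0 : ℝ) ≤ i)]
  linarith [cutPoint_succ_sub b N i]

section MaxPartitionSize

variable {b : ℝ}

/-- `(2n − 1)² < 1 + 2/b` is a rewriting of `2bn(n − 1) < 1`. -/
theorem admissible_of_lt_half_add {n : ℝ} (hb : 0 < b) (hn : 1 / 2 ≤ n)
    (h : n < 1 / 2 + √(1 + 2 / b) / 2) : 2 * b * n * (n - 1) < 1 := by
  have hsq : (2 * n - 1) ^ 2 < 1 + 2 / b :=
    (Real.lt_sqrt (by linarith)).1 (by linarith)
  have hscaled : b * (2 * n - 1) ^ 2 < b + 2 := by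
    calc b * (2 * n - 1) ^ 2 < b * (1 + 2 / b) := mul_lt_mul_of_pos_left hsq hb
      _ = b + 2 := by field_simp
  nlinarith

theorem two_le_maxPartitionSize (hb : 0 < b) (hb4 : b < 1 / 4) : 2 ≤ maxPartitionSize b := by
  have h8 : 8 < 2 / b := by rw [lt_div_iff₀ hb]; linarith
  have h3 : (3 : ℝ) < √(1 + 2 / b) := (Real.lt_sqrt (by norm_num)).2 (by linarith)
  have h1 : ((1 : ℤ) : ℝ) < (-1 / 2 : ℝ) + √(1 + 2 / b) / 2 := by push_cast; linarith
  exact Int.lt_ceil.2 h1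

theorem maxPartitionSize_admissible (hb : 0 < b) (hb4 : b < 1 / 4) :
    2 * b * (maxPartitionSize b : ℝ) * ((maxPartitionSize b : ℝ) - 1) < 1 := by
  have h2 : (2 : ℝ) ≤ maxPartitionSize b := by exact_mod_cast two_le_maxPartitionSize hb hb4
  have hlt := Int.ceil_lt_add_one ((-1 / 2 : ℝ) + √(1 + 2 / b) / 2)
  exact admissible_of_lt_half_add hb (by linarith) (by rw [maxPartitionSize]; linarith)

end MaxPartitionSize

theorem stmt_13 (b : ℝ) (hb : 0 < b) (N : ℕ) (hN : 1 ≤ N)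
    (hadm : 2 * b * N * (N - 1) < 1)
    (k : ℕ → ℝ) (hk : ∀ i, k i = (i : ℝ) / N + 2 * b * i * ((i : ℝ) - N)) :
    (k 0 = 0 ∧ k N = 1 ∧ ∀ i : ℕ, 1 ≤ i → i ≤ N → k (i - 1) < k i) ∧
    (∀ b' : ℝ, 0 < b' → b' < 1 / 4 →
      (2 : ℤ) ≤ ⌈(-1 / 2 : ℝ) + Real.sqrt (1 + 2 / b') / 2⌉ ∧
      2 * b' * ((⌈(-1 / 2 : ℝ) + Real.sqrt (1 + 2 / b') / 2⌉ : ℤ) : ℝ) *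
        (((⌈(-1 / 2 : ℝ) + Real.sqrt (1 + 2 / b') / 2⌉ : ℤ) : ℝ) - 1) < 1) := by
  obtain rfl : k = cutPoint b N := funext hk
  refine ⟨⟨cutPoint_zero b N, cutPoint_self b (by omega), fun i hi _ => ?_⟩,
    fun b' hb' hb4 => ⟨two_le_maxPartitionSize hb' hb4, maxPartitionSize_admissible hb' hb4⟩⟩
  obtain ⟨j, rfl⟩ := Nat.exists_eq_add_of_le' hi
  exact cutPoint_lt_succ hb.le hN hadm j
end
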